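/- arXiv:1603.08560 — 5 statements merged into one kernel-verified Lean document; each statement's English description precedes it below -/
import Mathlib

section
/- Let n ≥ 3 and r an even integer with 0 ≤ r < n. Let A be an alternating n×n matrix written in block form with rows/columns partitioned as (1, n-2, 1): A = [[0, L, a],[-L^T, B, C],[-a, -C^T, 0]] with B an (n-2)×(n-2) alternating matrix. Set N = E_{1,n} - E_{n,1}. If rank(A + tN) ≤ r for all t ∈ K, then rank(B) ≤ r - 2. -/
/-!
Let `m = rank B`. Because `B` is skew-symmetric, a maximal independent family of its rows,
indexed by `S`, makes the principal submatrix `B_SS` invertible; because `B` is moreover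
alternating, `m` is even, alternating matrices of odd size having determinant zero. The minor of
`A + tN` on rows `{1} ∪ S` and columns `S ∪ {n}` is a block matrix with corner `B_SS` and opposite
corner `a + t`, so its Schur complement is `a + t` minus a constant and vanishes for no more than
one `t`. Hence `m + 1 ≤ rank (A + tN) ≤ r` for some `t`, and as `m` and `r` are even, `m ≤ r - 2`.
-/

open Matrix

namespace Matrix

theorem exists_eq_sub_transpose {ι R : Type*} [LinearOrder ι] [AddCommGroup R]
    {A : Matrix ι ι R} (hAT : Aᵀ = -A) (hA : ∀ i, A i i = 0) :
    ∃ U : Matrix ι ι R, A = U - Uᵀ := by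
  refine ⟨of fun i j => if i < j then A i j else 0, ?_⟩
  ext i j
  have hji : A j i = -A i j := congrFun (congrFun hAT i) j
  rcases lt_trichotomy i j with h | rfl | h
  · simp [h, h.not_gt]
  · simp [hA]
  · simp [h, h.not_gt, hji]

theorem det_sub_transpose_eq_zero_of_odd {ι R : Type*} [Fintype ι] [DecidableEq ι] [CommRing R]
    (hι : Odd (Fintype.card ι)) (U : Matrix ι ι R) : (U - Uᵀ).det = 0 := by
  -- `det G = -det G` forces `det G = 0` only without 2-torsion, hence the detour through the
  -- generic matrix over `ℤ[X_ij]`.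
  let G : Matrix ι ι (MvPolynomial (ι × ι) ℤ) := of fun i j => MvPolynomial.X (i, j)
  have hG : (G - Gᵀ).det = 0 := by
    refine self_eq_neg.mp ?_
    conv_lhs => rw [← det_transpose, transpose_sub, transpose_transpose, ← neg_sub, det_neg,
      hι.neg_one_pow, neg_one_mul]
  let φ : MvPolynomial (ι × ι) ℤ →+* R :=
    MvPolynomial.eval₂Hom (Int.castRingHom R) fun p => U p.1 p.2
  have hU : φ.mapMatrix (G - Gᵀ) = U - Uᵀ := by
    ext i j
    simp [G, φ]
  rw [← hU, ← RingHom.map_det, hG, map_zero]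

variable {ι κ K : Type*} [Fintype ι] [Field K]

theorem exists_linearIndependent_rows [Fintype κ] (A : Matrix ι κ K) :
    ∃ f : Fin A.rank → ι, LinearIndependent K (A.row ∘ f) ∧
      ∀ i, A.row i ∈ Submodule.span K (Set.range (A.row ∘ f)) := by
  obtain ⟨σ, a, ha, hspan, hli⟩ := exists_linearIndependent' K A.row
  have : Fintype σ := have := Finite.of_injective a ha; Fintype.ofFinite σ
  have hcard : Fintype.card σ = A.rank := by
    rw [rank_eq_finrank_span_row, ← hspan, finrank_span_eq_card hli]
  let e : Fin A.rank ≃ σ := (Fintype.equivFinOfCardEq hcard).symm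
  refine ⟨a ∘ e, hli.comp e e.injective, fun i => ?_⟩
  rw [← Function.comp_assoc, e.surjective.range_comp, hspan]
  exact Submodule.subset_span ⟨i, rfl⟩

theorem exists_isUnit_submatrix_of_transpose_eq_neg {B : Matrix ι ι K}
    (hB : Bᵀ = -B) : ∃ f : Fin B.rank → ι, IsUnit (B.submatrix f f) := by
  obtain ⟨f, hli, hspan⟩ := exists_linearIndependent_rows B
  set P := B.submatrix f f
  choose X hX using fun i => (Submodule.mem_span_range_iff_exists_fun K).mp (hspan i)
  have hBX : ∀ i j, B i j = ∑ l, X i l * B (f l) j := fun i j => by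
    simpa [Finset.sum_apply] using (congrFun (hX i) j).symm
  -- Writing the rows of `B` as `X` times the independent rows `R`, skew-symmetry gives
  -- `R = Pᵀ * -Xᵀ`, so `P` has rank at least that of `R`.
  have hR : B.submatrix f id = Pᵀ * -(of X)ᵀ := by
    ext k j
    have hjk : B (f k) j = -B j (f k) := by simpa using congrFun (congrFun hB j) (f k)
    simp [hjk, hBX j (f k), mul_apply, P, mul_comm]
  have hrank : B.rank ≤ P.rank := calc
    B.rank = (B.submatrix f id).rank := by
      rw [LinearIndependent.rank_matrix (M := B.submatrix f id) hli, Fintype.card_fin]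
    _ ≤ Pᵀ.rank := hR ▸ rank_mul_le_left _ _
    _ = P.rank := rank_transpose P
  refine ⟨f, linearIndependent_rows_iff_isUnit.mp ?_⟩
  rw [linearIndependent_iff_card_eq_finrank_span, Set.finrank, ← rank_eq_finrank_span_row,
    Fintype.card_fin]
  exact le_antisymm hrank (rank_le_height P)

theorem even_rank_of_alternating {B : Matrix ι ι K} (hBT : Bᵀ = -B) (hB : ∀ i, B i i = 0) :
    Even B.rank := by
  obtain ⟨f, hP⟩ := exists_isUnit_submatrix_of_transpose_eq_neg hBT
  by_contra hodd
  obtain ⟨U, hU⟩ := exists_eq_sub_transpose (A := B.submatrix f f)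
    (by rw [transpose_submatrix, hBT]; rfl) fun i => hB (f i)
  refine ((isUnit_iff_isUnit_det _).mp hP).ne_zero ?_
  rw [hU]
  exact det_sub_transpose_eq_zero_of_odd (by simpa using Nat.not_even_iff_odd.mp hodd) U

theorem exists_isUnit_fromBlocks_corner_add {m : Type*} [Fintype m] [DecidableEq m]
    {P : Matrix m m K} (hP : IsUnit P) (b : Matrix m Unit K) (c : Matrix Unit m K) (d : K) :
    ∃ t : K, IsUnit (fromBlocks P b c (of fun _ _ => d + t)) := by
  have := hP.invertible
  refine ⟨1 - d + (c * ⅟P * b) () (), ?_⟩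
  rw [isUnit_fromBlocks_iff_of_invertible₁₁]
  convert isUnit_one
  ext ⟨⟩ ⟨⟩
  simp only [sub_apply, of_apply, one_apply_eq]
  ring

theorem exists_rank_submatrix_add_one_le [DecidableEq ι] [Fintype κ] (A : Matrix ι ι K)
    (e : κ → ι) {i₀ j₀ : ι}
    (hi₀ : ∀ k, e k ≠ i₀) (hj₀ : ∀ k, e k ≠ j₀) (hij : i₀ ≠ j₀)
    (hB : (A.submatrix e e)ᵀ = -A.submatrix e e) :
    ∃ t : K, (A.submatrix e e).rank + 1 ≤ (A + t • (single i₀ j₀ 1 - single j₀ i₀ 1)).rank := by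
  obtain ⟨f, hP⟩ := exists_isUnit_submatrix_of_transpose_eq_neg hB
  let rows : Fin _ ⊕ Unit → ι := Sum.elim (e ∘ f) fun _ => i₀
  let cols : Fin _ ⊕ Unit → ι := Sum.elim (e ∘ f) fun _ => j₀
  have hblocks : ∀ t : K, (A + t • (single i₀ j₀ 1 - single j₀ i₀ 1)).submatrix rows cols =
      fromBlocks ((A.submatrix e e).submatrix f f) (of fun k _ => A (e (f k)) j₀)
        (of fun _ l => A i₀ (e (f l))) (of fun _ _ => A i₀ j₀ + t) := fun t => by
    ext (k | _) (l | _) <;> simp [rows, cols, single, hij.symm, (hi₀ _).symm, (hj₀ _).symm]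
  obtain ⟨t, ht⟩ := exists_isUnit_fromBlocks_corner_add hP (of fun k _ => A (e (f k)) j₀)
    (of fun _ l => A i₀ (e (f l))) (A i₀ j₀)
  refine ⟨t, ?_⟩
  calc (A.submatrix e e).rank + 1
      = ((A + t • (single i₀ j₀ 1 - single j₀ i₀ 1)).submatrix rows cols).rank := by
        rw [hblocks, rank_of_isUnit _ ht, Fintype.card_sum, Fintype.card_fin, Fintype.card_unit]
    _ ≤ _ := rank_submatrix_le _ _ _

end Matrix

theorem alternating_corner_lemma (K : Type*) [Field K] (n r : ℕ)
    (hn : 3 ≤ n) (hr : Even r)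
    (A : Matrix (Fin n) (Fin n) K)
    (hAlt : Aᵀ = -A ∧ ∀ i : Fin n, A i i = 0)
    (hrk : ∀ t : K,
      (A + t • (Matrix.single (⟨0, by omega⟩ : Fin n) (⟨n - 1, by omega⟩ : Fin n) (1 : K)
        - Matrix.single (⟨n - 1, by omega⟩ : Fin n) (⟨0, by omega⟩ : Fin n) (1 : K))).rank ≤ r) :
    (A.submatrix
      (fun i : Fin (n - 2) => (⟨i.1 + 1, by have := i.2; omega⟩ : Fin n))
      (fun j : Fin (n - 2) => (⟨j.1 + 1, by have := j.2; omega⟩ : Fin n))).rank ≤ r - 2 := by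
  obtain ⟨hAT, hA⟩ := hAlt
  let e : Fin (n - 2) → Fin n := fun i => ⟨i.1 + 1, by have := i.2; omega⟩
  have hBT : (A.submatrix e e)ᵀ = -A.submatrix e e := by rw [transpose_submatrix, hAT]; rfl
  obtain ⟨m, hm⟩ := even_rank_of_alternating hBT fun i => hA (e i)
  obtain ⟨t, ht⟩ := exists_rank_submatrix_add_one_le A e (i₀ := ⟨0, by omega⟩)
    (j₀ := ⟨n - 1, by omega⟩) (fun k => by simp [e, Fin.ext_iff])
    (fun k => by have := k.2; simp [e, Fin.ext_iff]; omega) (by simp [Fin.ext_iff]; omega) hBT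
  have := ht.trans (hrk t)
  obtain ⟨s, rfl⟩ := hr
  show (A.submatrix e e).rank ≤ s + s - 2
  omega
end

section
/- Extraction corollary (alternating case): let M be an alternating n×n matrix, i ≠ j indices in {1,...,n}, and r an even integer with 0 ≤ r < n, n ≥ 3. If rank(M + t(E_{i,j} - E_{j,i})) ≤ r for all t ∈ K, then the submatrix of M obtained by deleting the i-th and j-th rows and columns has rank at most r - 2. -/
/-!
Alternating matrices have even rank: an alternating form `B ≠ 0` has a pair `u, v` with
`B u v = 1`, and restricting `B` to `ker (B u) ⊓ ker (B v)` lowers the rank by exactly two.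

Let `S` be the complement of `{i, j}`, `N = M[S, S]` and `M' = M + E_{i,j} - E_{j,i}`, so that `M`
and `M'` have the same columns in `S`. If `rank N ≥ r`, then `rank N = rank M[·, S] = rank M =
rank M' = r`: the columns in `S` span the column spaces of both `M` and `M'`, and no nonzero vector
of that common space vanishes on `S`. But `M' e_j - M e_j = e_i` lies in it and vanishes on `S`.
So `rank N < r`, and since both are even, `rank N ≤ r - 2`.
-/

open Module Matrix

namespace LinearMap

variable {K V : Type*} [Field K] [AddCommGroup V] [Module K V]

theorem finrank_ker_inf_ker_add_two [FiniteDimensional K V] {f g : V →ₗ[K] K} {u v : V}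
    (hfu : f u = 1) (hfv : f v = 0) (hgu : g u = 0) (hgv : g v = 1) :
    finrank K ↥(ker f ⊓ ker g) + 2 = finrank K V := by
  have hsurj : range (f.prod g) = ⊤ := by
    refine range_eq_top.mpr fun p => ⟨p.1 • u + p.2 • v, ?_⟩
    simp [hfu, hfv, hgu, hgv]
  have := (f.prod g).finrank_range_add_finrank_ker
  rw [hsurj, finrank_top, finrank_prod, finrank_self, ker_prod] at this
  omega

namespace IsAlt

variable {B : V →ₗ[K] V →ₗ[K] K} {u v : V}

theorem finrank_ker_domRestrict₁₂ (hB : B.IsAlt) (huv : B u v = 1) :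
    finrank K (ker (B.domRestrict₁₂ (ker (B u) ⊓ ker (B v)) (ker (B u) ⊓ ker (B v)))) =
      finrank K (ker B) := by
  set W := ker (B u) ⊓ ker (B v)
  have hvu : B v u = -1 := by rw [← hB.neg, huv]
  have hW : ∀ y ∈ W, B y u = 0 ∧ B y v = 0 := fun y hy => by
    simp only [W, Submodule.mem_inf, mem_ker] at hy
    rw [← hB.neg u, ← hB.neg v, hy.1, hy.2, neg_zero, and_self]
  have hker_le : ker B ≤ W := fun y hy => by
    rw [mem_ker] at hy
    simp [W, ← hB.neg y, hy]
  suffices ker (B.domRestrict₁₂ W W) = (ker B).comap W.subtype by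
    rw [this]
    exact (Submodule.comapSubtypeEquivOfLe hker_le).finrank_eq
  ext y
  simp only [mem_ker, Submodule.mem_comap, Submodule.subtype_apply]
  refine ⟨fun hy => ext fun z => ?_, fun hy => ext fun z => by simp [domRestrict₁₂_apply, hy]⟩
  -- `z` is a vector of `W` plus a combination of `u` and `v`, both orthogonal to `y`
  have hw : z - B u z • v + B v z • u ∈ W := by
    simp [W, huv, hvu, hB.self_eq_zero]
  have := congr($hy ⟨_, hw⟩)
  simp only [domRestrict₁₂_apply, map_add, map_sub, map_smul] at this
  simpa [(hW y y.2).1, (hW y y.2).2] using this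

theorem finrank_range_domRestrict₁₂_add_two [FiniteDimensional K V] (hB : B.IsAlt)
    (huv : B u v = 1) :
    finrank K (range (B.domRestrict₁₂ (ker (B u) ⊓ ker (B v)) (ker (B u) ⊓ ker (B v)))) + 2 =
      finrank K (range B) := by
  have hdim : finrank K ↥(ker (B u) ⊓ ker (B v)) + 2 = finrank K V :=
    finrank_ker_inf_ker_add_two (u := v) (v := -u) huv (by simp [hB.self_eq_zero u])
      (hB.self_eq_zero v) (by simp [← hB.neg u v, huv])
  have := B.finrank_range_add_finrank_ker
  have := (B.domRestrict₁₂ (ker (B u) ⊓ ker (B v))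
    (ker (B u) ⊓ ker (B v))).finrank_range_add_finrank_ker
  have := hB.finrank_ker_domRestrict₁₂ huv
  omega

theorem even_finrank_range [FiniteDimensional K V] (hB : B.IsAlt) :
    Even (finrank K (range B)) := by
  induction hr : finrank K (range B) using Nat.strong_induction_on generalizing V with
  | _ r ih =>
  by_cases h0 : B = 0
  · rw [← hr, h0, range_zero, finrank_bot]
    exact Even.zero
  obtain ⟨u, v, huv⟩ : ∃ u v, B u v = 1 := by
    obtain ⟨u, v, h⟩ : ∃ u v, B u v ≠ 0 := by
      by_contra! h
      exact h0 (ext₂ h)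
    exact ⟨u, (B u v)⁻¹ • v, by simp [h]⟩
  have hB' : (B.domRestrict₁₂ (ker (B u) ⊓ ker (B v)) (ker (B u) ⊓ ker (B v))).IsAlt :=
    fun x => hB x
  have hdrop := hB.finrank_range_domRestrict₁₂_add_two huv
  rw [← hr, ← hdrop]
  exact (ih _ (by omega) hB' rfl).add even_two

end IsAlt

end LinearMap

namespace Matrix

open LinearMap (range ker mem_range_self)

variable {K m n ι κ : Type*} [Field K]

theorem dotProduct_mulVec_self_eq_zero [Fintype m] {A : Matrix m m K} (hT : Aᵀ = -A)
    (hD : ∀ a, A a a = 0) (x : m → K) : x ⬝ᵥ (A *ᵥ x) = 0 := by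
  have hskew (a b : m) : A b a = -A a b := by simpa using congr_fun₂ hT a b
  simp only [dotProduct, mulVec, Finset.mul_sum]
  rw [← Finset.sum_product']
  refine Finset.sum_ninvolution Prod.swap (fun p => ?_) (fun p hp hswap => hp ?_)
    (fun _ => Finset.mem_univ _) (fun _ => rfl)
  · simp only [Prod.fst_swap, Prod.snd_swap, hskew p.1 p.2]
    ring
  · have hdiag : p.1 = p.2 := congr_arg Prod.snd hswap
    rw [hdiag, hD, zero_mul, mul_zero]

theorem even_rank_of_transpose_eq_neg [Fintype m] [DecidableEq m] {A : Matrix m m K}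
    (hT : Aᵀ = -A) (hD : ∀ a, A a a = 0) : Even A.rank := by
  have hB : ((dotProductEquiv K m).toLinearMap ∘ₗ A.mulVecLin).IsAlt := fun x => by
    simpa [dotProduct_comm] using dotProduct_mulVec_self_eq_zero hT hD x
  have := hB.even_finrank_range
  rwa [LinearMap.range_comp, LinearEquiv.finrank_map_eq] at this

theorem range_mulVecLin_submatrix_eq_of_rank_eq [Fintype n] [Fintype κ] (A : Matrix m n K)
    (g : κ → n) (h : (A.submatrix id g).rank = A.rank) :
    range (A.submatrix id g).mulVecLin = range A.mulVecLin := by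
  refine Submodule.eq_of_le_of_finrank_eq ?_ h
  rw [range_mulVecLin, range_mulVecLin]
  exact Submodule.span_mono (Set.range_comp_subset_range g A.col)

theorem eq_zero_of_mem_range_of_rank_submatrix_eq [Fintype n] (A : Matrix m n K) (f : ι → m)
    (h : (A.submatrix f id).rank = A.rank) {v : m → K} (hv : v ∈ range A.mulVecLin)
    (hvf : ∀ i, v (f i) = 0) : v = 0 := by
  obtain ⟨x, rfl⟩ := hv
  have hker : ker A.mulVecLin = ker (A.submatrix f id).mulVecLin := by
    refine Submodule.eq_of_le_of_finrank_eq (fun y hy => funext fun i => congr_fun hy (f i)) ?_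
    have := A.mulVecLin.finrank_range_add_finrank_ker
    have := (A.submatrix f id).mulVecLin.finrank_range_add_finrank_ker
    unfold rank at h
    omega
  exact (hker ▸ funext hvf : x ∈ ker A.mulVecLin)

theorem rank_submatrix_lt_of_sub_mulVec_ne_zero [Fintype n] [Fintype κ] {M M' : Matrix m n K}
    {k : ℕ} (hM : M.rank ≤ k) (hM' : M'.rank ≤ k) (f : ι → m) (g : κ → n)
    (hcols : M.submatrix id g = M'.submatrix id g) (x : n → K) (hx : (M' - M) *ᵥ x ≠ 0)
    (hxf : ∀ i, ((M' - M) *ᵥ x) (f i) = 0) :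
    (M.submatrix f g).rank < k := by
  by_contra! hk
  replace hk : k ≤ ((M.submatrix id g).submatrix f id).rank := hk
  have hNA : ((M.submatrix id g).submatrix f id).rank ≤ (M.submatrix id g).rank :=
    rank_submatrix_le (M.submatrix id g) f id
  have hAM : (M.submatrix id g).rank ≤ M.rank := rank_submatrix_le M id g
  have hAM' : (M.submatrix id g).rank ≤ M'.rank := hcols ▸ rank_submatrix_le M' id g
  have hrange : range (M.submatrix id g).mulVecLin = range M.mulVecLin :=
    range_mulVecLin_submatrix_eq_of_rank_eq M g (by omega)
  have hrange' : range (M.submatrix id g).mulVecLin = range M'.mulVecLin :=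
    hcols ▸ range_mulVecLin_submatrix_eq_of_rank_eq M' g (by rw [← hcols]; omega)
  have hv : (M' - M) *ᵥ x ∈ range (M.submatrix id g).mulVecLin := by
    rw [sub_mulVec]
    exact sub_mem (hrange' ▸ mem_range_self M'.mulVecLin x)
      (hrange ▸ mem_range_self M.mulVecLin x)
  exact hx (eq_zero_of_mem_range_of_rank_submatrix_eq _ f (by omega) hv hxf)

end Matrix

theorem extraction_alternating_general (K : Type*) [Field K] (n r : ℕ)
    (hr : Even r)
    (M : Matrix (Fin n) (Fin n) K)
    (hAlt : Mᵀ = -M ∧ ∀ i : Fin n, M i i = 0)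
    (i j : Fin n) (hij : i ≠ j)
    (hrk : ∀ t : K,
      (M + t • (Matrix.single i j (1 : K) - Matrix.single j i (1 : K))).rank ≤ r) :
    (M.submatrix
      (fun k : {k : Fin n // k ≠ i ∧ k ≠ j} => k.1)
      (fun k : {k : Fin n // k ≠ i ∧ k ≠ j} => k.1)).rank ≤ r - 2 := by
  obtain ⟨hT, hD⟩ := hAlt
  set E : Matrix (Fin n) (Fin n) K := single i j 1 - single j i 1
  have hEj (a : Fin n) : E a j = if a = i then 1 else 0 := by
    simp [E, single_apply, hij, eq_comm]
  have hlt := rank_submatrix_lt_of_sub_mulVec_ne_zero (M' := M + E) (by simpa using hrk 0)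
    (by simpa using hrk 1) (fun k : {k : Fin n // k ≠ i ∧ k ≠ j} => k.1)
    (fun k : {k : Fin n // k ≠ i ∧ k ≠ j} => k.1)
    (by ext a b; simp [E, b.2.1.symm, b.2.2.symm]) (Pi.single j 1)
    (fun h => by simpa [hEj] using congr_fun h i) (fun k => by simp [hEj, k.2.1])
  obtain ⟨a, ha⟩ := hr
  obtain ⟨b, hb⟩ := even_rank_of_transpose_eq_neg
    (A := M.submatrix (fun k : {k : Fin n // k ≠ i ∧ k ≠ j} => k.1) (fun k => k.1))
    (by rw [transpose_submatrix, hT]; rfl) (fun k => hD k)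
  omega

theorem extraction_alternating (K : Type*) [Field K] (n r : ℕ)
    (hn : 3 ≤ n) (hr : Even r) (hrn : r < n)
    (M : Matrix (Fin n) (Fin n) K)
    (hAlt : Mᵀ = -M ∧ ∀ i : Fin n, M i i = 0)
    (i j : Fin n) (hij : i ≠ j)
    (hrk : ∀ t : K,
      (M + t • (Matrix.single i j (1 : K) - Matrix.single j i (1 : K))).rank ≤ r) :
    (M.submatrix
      (fun k : {k : Fin n // k ≠ i ∧ k ≠ j} => k.1)
      (fun k : {k : Fin n // k ≠ i ∧ k ≠ j} => k.1)).rank ≤ r - 2 :=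
  extraction_alternating_general K n r hr M hAlt i j hij hrk
end

section
/- Extraction corollary (symmetric case): let K be a field with more than 2 elements, M a symmetric n×n matrix, i ≠ j in {1,...,n}, and 0 ≤ r < n with n ≥ 3. If rank(M + t(E_{i,j} + E_{j,i})) ≤ r for all t ∈ K, then the submatrix obtained from M by deleting the i-th and j-th rows and columns has rank at most r - 2. -/
/-!
Suppose the minor `N` had rank `s ≥ r - 1`, and pick a nonsingular `s × s` submatrix `D` of `N`.
Bordering `D` by the rows and columns `i, j` gives a square submatrix of
`M + t (E_{i,j} + E_{j,i})` of size `s + 2 > r`, whose determinant is, by the Schur complement,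
`det D · det (P + t [[0, 1], [1, 0]]) = -det D · (t² + b t + c)` for some `b, c` independent of `t`.
A monic quadratic has at most two roots, so since `|K| > 2` this determinant is nonzero for some `t`,
contradicting the rank bound.
-/

open Matrix

section

variable {K : Type*} [Field K]

lemma Matrix.exists_linearIndependent_rows_of_le_rank {m n : Type*} [Fintype m] [Fintype n]
    (A : Matrix m n K) {k : ℕ} (hk : k ≤ A.rank) :
    ∃ f : Fin k → m, LinearIndependent K (A.submatrix f id).row := by
  obtain ⟨κ, a, ha, hspan, hli⟩ := exists_linearIndependent' K A.row
  have : Fintype κ := Fintype.ofInjective a ha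
  have hcard : k ≤ Fintype.card κ := by
    rwa [← finrank_span_eq_card hli, hspan, ← rank_eq_finrank_span_row]
  let e : Fin k ↪ κ := (Fin.castLEEmb hcard).trans (Fintype.equivFin κ).symm.toEmbedding
  exact ⟨a ∘ e, hli.comp e e.injective⟩

lemma Matrix.exists_submatrix_det_ne_zero_of_le_rank {m n : Type*} [Fintype m] [Fintype n]
    (A : Matrix m n K) {k : ℕ} (hk : k ≤ A.rank) :
    ∃ (f : Fin k → m) (g : Fin k → n), (A.submatrix f g).det ≠ 0 := by
  obtain ⟨f, hf⟩ := A.exists_linearIndependent_rows_of_le_rank hk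
  have hrank : (A.submatrix f id)ᵀ.rank = k := by
    rw [rank_transpose, hf.rank_matrix, Fintype.card_fin]
  obtain ⟨g, hg⟩ := (A.submatrix f id)ᵀ.exists_linearIndependent_rows_of_le_rank hrank.ge
  refine ⟨f, g, fun h => ?_⟩
  have hfg : (A.submatrix f id)ᵀ.submatrix g id = (A.submatrix f g)ᵀ := rfl
  rw [hfg, linearIndependent_rows_iff_isUnit, isUnit_transpose, isUnit_iff_isUnit_det, h] at hg
  exact not_isUnit_zero hg

lemma Matrix.card_le_rank_of_submatrix_det_ne_zero {m n ι : Type*} [Fintype n] [Fintype ι]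
    [DecidableEq ι] (A : Matrix m n K) (f : ι → m) (g : ι → n) (h : (A.submatrix f g).det ≠ 0) :
    Fintype.card ι ≤ A.rank :=
  (rank_of_isUnit _ ((isUnit_iff_isUnit_det _).mpr h.isUnit)).symm.trans_le
    (rank_submatrix_le A f g)

lemma exists_mul_self_add_mul_add_ne_zero (hK : 2 < Cardinal.mk K) (b c : K) :
    ∃ t : K, t * t + b * t + c ≠ 0 := by
  obtain ⟨u, hu⟩ := Cardinal.exists_notMem_of_length_lt [(0 : K), 1] (by simpa using hK)
  simp only [List.mem_cons, List.not_mem_nil, or_false, not_or] at hu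
  by_contra! h
  have h0 := h 0
  have h1 := h 1
  have hu' := h u
  have : u * (u - 1) = 0 := by linear_combination hu' - u * h1 + (u - 1) * h0
  simp [sub_eq_zero, hu.1, hu.2] at this

lemma det_add_smul_swap_fin_two (P : Matrix (Fin 2) (Fin 2) K) (t : K) :
    (P + t • !![0, 1; 1, 0]).det
      = -(t * t + (P 0 1 + P 1 0) * t + (P 0 1 * P 1 0 - P 0 0 * P 1 1)) := by
  simp [det_fin_two]
  ring

lemma exists_det_fromBlocks_add_smul_swap_ne_zero {n : Type*} [Fintype n] [DecidableEq n]
    (hK : 2 < Cardinal.mk K) (A : Matrix (Fin 2) (Fin 2) K) (B : Matrix (Fin 2) n K)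
    (C : Matrix n (Fin 2) K) (D : Matrix n n K) (hD : D.det ≠ 0) :
    ∃ t : K, (fromBlocks (A + t • !![0, 1; 1, 0]) B C D).det ≠ 0 := by
  let := invertibleOfNonzero hD
  let := D.invertibleOfDetInvertible
  set P := A - B * ⅟D * C
  obtain ⟨t, ht⟩ := exists_mul_self_add_mul_add_ne_zero hK (P 0 1 + P 1 0)
    (P 0 1 * P 1 0 - P 0 0 * P 1 1)
  refine ⟨t, ?_⟩
  rw [det_fromBlocks₂₂, add_sub_right_comm, det_add_smul_swap_fin_two]
  exact mul_ne_zero hD (neg_ne_zero.mpr ht)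

end

lemma Matrix.submatrix_single_add_single_sumElim {R ι m n : Type*} [Semiring R] [DecidableEq ι]
    {i j : ι} (hij : i ≠ j) (φ : m → ι) (ψ : n → ι) (hφ : ∀ a, φ a ≠ i ∧ φ a ≠ j)
    (hψ : ∀ b, ψ b ≠ i ∧ ψ b ≠ j) :
    (single i j (1 : R) + single j i 1).submatrix (Sum.elim ![i, j] φ) (Sum.elim ![i, j] ψ)
      = fromBlocks !![0, 1; 1, 0] 0 0 0 := by
  ext (a | a) (b | b)
  · fin_cases a <;> fin_cases b <;> simp [hij, hij.symm]
  · fin_cases a <;> simp [(hψ b).1.symm, (hψ b).2.symm]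
  · fin_cases b <;> simp [(hφ a).1.symm, (hφ a).2.symm]
  · simp [(hφ a).1.symm, (hφ a).2.symm]

theorem extraction_symmetric_general (K : Type*) [Field K] (hK : 2 < Cardinal.mk K)
    (n r : ℕ)
    (M : Matrix (Fin n) (Fin n) K)
    (i j : Fin n) (hij : i ≠ j)
    (hrk : ∀ t : K,
      (M + t • (Matrix.single i j (1 : K) + Matrix.single j i (1 : K))).rank ≤ r) :
    (M.submatrix
      (fun k : {k : Fin n // k ≠ i ∧ k ≠ j} => k.1)
      (fun k : {k : Fin n // k ≠ i ∧ k ≠ j} => k.1)).rank ≤ r - 2 := by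
  classical
  set N := M.submatrix (fun k : {k : Fin n // k ≠ i ∧ k ≠ j} => k.1)
    (fun k : {k : Fin n // k ≠ i ∧ k ≠ j} => k.1)
  by_contra! hN
  obtain ⟨f, g, hfg⟩ := N.exists_submatrix_det_ne_zero_of_le_rank le_rfl
  set F := Sum.elim ![i, j] fun a => (f a).1
  set G := Sum.elim ![i, j] fun b => (g b).1
  set X := M.submatrix F G
  obtain ⟨t, ht⟩ := exists_det_fromBlocks_add_smul_swap_ne_zero hK X.toBlocks₁₁ X.toBlocks₁₂
    X.toBlocks₂₁ X.toBlocks₂₂ hfg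
  have hblocks : (M + t • (single i j 1 + single j i 1)).submatrix F G
      = fromBlocks (X.toBlocks₁₁ + t • !![0, 1; 1, 0]) X.toBlocks₁₂ X.toBlocks₂₁ X.toBlocks₂₂ := by
    change X + t • (single i j (1 : K) + single j i 1).submatrix F G = _
    rw [submatrix_single_add_single_sumElim hij _ _
      (fun a => (f a).2) (fun b => (g b).2), ← fromBlocks_toBlocks X, fromBlocks_smul,
      fromBlocks_add]
    simp
  have hcard := (M + t • (single i j 1 + single j i 1)).card_le_rank_of_submatrix_det_ne_zero F G
    (hblocks ▸ ht)
  simp only [Fintype.card_sum, Fintype.card_fin] at hcard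
  have := hrk t
  omega

theorem extraction_symmetric (K : Type*) [Field K] (hK : 2 < Cardinal.mk K)
    (n r : ℕ) (hn : 3 ≤ n) (hrn : r < n)
    (M : Matrix (Fin n) (Fin n) K) (hSym : Mᵀ = M)
    (i j : Fin n) (hij : i ≠ j)
    (hrk : ∀ t : K,
      (M + t • (Matrix.single i j (1 : K) + Matrix.single j i (1 : K))).rank ≤ r) :
    (M.submatrix
      (fun k : {k : Fin n // k ≠ i ∧ k ≠ j} => k.1)
      (fun k : {k : Fin n // k ≠ i ∧ k ≠ j} => k.1)).rank ≤ r - 2 :=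
  extraction_symmetric_general K hK n r M i j hij hrk
end

section
/- Let S be a linear subspace of the alternating n×n matrices over a field K with dim S > 3 and with every matrix of S of rank at most 2. Then there exists an invertible P ∈ GL_n(K) such that P S P^T ⊆ WA_{n,1,1}(K), i.e., every matrix of P S P^T has all entries zero outside the first row and first column. -/
/-!
A nonzero alternating matrix of rank at most two is a wedge `u ∧ v = u vᵀ - v uᵀ` of two
independent vectors, and it determines its plane `⟨u, v⟩`. When `u ∧ v + u' ∧ v'` again has rank
at most two the two planes meet, for otherwise `u, v, u', v'` are independent and the sum has rank
four. Planes meeting pairwise either all contain one line or all lie in one 3-space `W`; in the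
second case `S ⊆ Λ² W` has dimension at most three. Hence every element of `S` is `e ∧ w` for one
fixed `e ≠ 0`, and any invertible `P` with `P e = e₀` works, because `P (e ∧ w) Pᵀ = P e ∧ P w`.
-/

open Matrix Submodule Module

section LinearAlgebra

variable {K : Type*} [Field K]

section Planes

variable {V : Type*} [AddCommGroup V] [Module K V]

theorem finrank_span_pair_eq_two {u v : V}
    (h : LinearIndependent K ![u, v]) : finrank K (span K {u, v}) = 2 := by
  rw [← Matrix.range_cons_cons_empty u v ![], finrank_span_eq_card h, Fintype.card_fin]

theorem Submodule.exists_span_range_eq_of_finrank_eq {W : Submodule K V} [FiniteDimensional K W]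
    {m : ℕ} (hW : finrank K W = m) : ∃ b : Fin m → V, span K (Set.range b) = W := by
  let B := finBasisOfFinrankEq K W hW
  refine ⟨W.subtype ∘ B, ?_⟩
  rw [Set.range_comp, span_image, B.span_eq, map_top, range_subtype]

variable [FiniteDimensional K V]

theorem Submodule.sup_eq_of_disjoint_of_finrank_eq_two {A B U : Submodule K V}
    (hA : A ≠ ⊥) (hB : B ≠ ⊥) (hAB : Disjoint A B) (hAU : A ≤ U) (hBU : B ≤ U)
    (hU : finrank K U = 2) : A ⊔ B = U := by
  refine eq_of_le_of_finrank_le (sup_le hAU hBU) ?_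
  have hsum := finrank_sup_add_finrank_inf_eq A B
  rw [hAB.eq_bot, finrank_bot] at hsum
  have hA' := mt Submodule.finrank_eq_zero.1 hA
  have hB' := mt Submodule.finrank_eq_zero.1 hB
  omega

theorem Submodule.isAtom_inf_of_finrank_eq_two {U₁ U₂ : Submodule K V}
    (h₁ : finrank K U₁ = 2) (h₂ : finrank K U₂ = 2) (hne : U₁ ≠ U₂) (hmeet : U₁ ⊓ U₂ ≠ ⊥) :
    IsAtom (U₁ ⊓ U₂) := by
  rw [isAtom_iff_finrank_eq_one]
  have hlt : U₁ ⊓ U₂ < U₁ := inf_le_left.lt_of_ne fun h =>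
    hne (eq_of_le_of_finrank_eq (inf_eq_left.1 h) (h₁.trans h₂.symm))
  have := finrank_lt_finrank_of_lt hlt
  have := mt Submodule.finrank_eq_zero.1 hmeet
  omega

theorem Submodule.le_sup_of_disjoint_inf {U U₁ U₂ : Submodule K V} (hU : finrank K U = 2)
    (h₁ : U ⊓ U₁ ≠ ⊥) (h₂ : U ⊓ U₂ ≠ ⊥) (hdisj : Disjoint (U₁ ⊓ U₂) U) : U ≤ U₁ ⊔ U₂ := by
  have hdisj' : Disjoint (U ⊓ U₁) (U ⊓ U₂) := disjoint_iff_inf_le.2 <|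
    (le_inf (le_inf (inf_le_left.trans inf_le_right) (inf_le_right.trans inf_le_right))
      (inf_le_left.trans inf_le_left)).trans hdisj.le_bot
  rw [← sup_eq_of_disjoint_of_finrank_eq_two h₁ h₂ hdisj' inf_le_left inf_le_left hU]
  exact sup_le_sup inf_le_right inf_le_right

theorem Submodule.forall_inf_le_or_forall_le_sup {𝓟 : Set (Submodule K V)}
    (h2 : ∀ U ∈ 𝓟, finrank K U = 2) (hmeet : ∀ U ∈ 𝓟, ∀ U' ∈ 𝓟, U ⊓ U' ≠ ⊥)
    {U₁ U₂ : Submodule K V} (h₁ : U₁ ∈ 𝓟) (h₂ : U₂ ∈ 𝓟) (hne : U₁ ≠ U₂) :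
    (∀ U ∈ 𝓟, U₁ ⊓ U₂ ≤ U) ∨ ∀ U ∈ 𝓟, U ≤ U₁ ⊔ U₂ := by
  -- A plane `U` missing the line `U₁ ⊓ U₂` is spanned by `U ⊓ U₁` and `U ⊓ U₂`; once one such `U₃`
  -- exists, a plane through the line is spanned by the line and its meet with `U₃`.
  have hL := isAtom_inf_of_finrank_eq_two (h2 U₁ h₁) (h2 U₂ h₂) hne (hmeet U₁ h₁ U₂ h₂)
  refine or_iff_not_imp_left.2 fun h => ?_
  push Not at h
  obtain ⟨U₃, h₃, hL₃⟩ := h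
  rw [hL.not_le_iff_disjoint] at hL₃
  have hU₃ : U₃ ≤ U₁ ⊔ U₂ :=
    le_sup_of_disjoint_inf (h2 U₃ h₃) (hmeet _ h₃ _ h₁) (hmeet _ h₃ _ h₂) hL₃
  intro U hU
  by_cases hLU : U₁ ⊓ U₂ ≤ U
  · rw [← sup_eq_of_disjoint_of_finrank_eq_two hL.1 (hmeet U hU U₃ h₃)
      (hL₃.mono_right inf_le_right) hLU inf_le_left (h2 U hU)]
    exact sup_le (inf_le_left.trans le_sup_left) (inf_le_right.trans hU₃)
  · exact le_sup_of_disjoint_inf (h2 U hU) (hmeet U hU U₁ h₁) (hmeet U hU U₂ h₂)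
      (hL.not_le_iff_disjoint.1 hLU)

theorem Submodule.finrank_sup_eq_three {U₁ U₂ : Submodule K V}
    (h₁ : finrank K U₁ = 2) (h₂ : finrank K U₂ = 2) (hne : U₁ ≠ U₂) (hmeet : U₁ ⊓ U₂ ≠ ⊥) :
    finrank K ↥(U₁ ⊔ U₂) = 3 := by
  have := finrank_sup_add_finrank_inf_eq U₁ U₂
  rw [isAtom_iff_finrank_eq_one.1 (isAtom_inf_of_finrank_eq_two h₁ h₂ hne hmeet)] at this
  omega

end Planes

theorem exists_forall_dotProduct_eq {ι m : Type*} [Fintype ι] [Fintype m] {f : m → ι → K}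
    (hf : LinearIndependent K f) (c : m → K) : ∃ x, ∀ i, f i ⬝ᵥ x = c i := by
  have htop : LinearMap.range (Matrix.of f).mulVecLin = ⊤ := by
    apply eq_top_of_finrank_eq
    rw [← Matrix.rank, LinearIndependent.rank_matrix (M := Matrix.of f) hf,
      finrank_fintype_fun_eq_card]
  obtain ⟨x, hx⟩ : c ∈ LinearMap.range (Matrix.of f).mulVecLin := htop ▸ mem_top
  exact ⟨x, fun i => congrFun hx i⟩

theorem Matrix.exists_isUnit_mulVec_eq {ι : Type*} [Fintype ι] [DecidableEq ι] {e f : ι → K}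
    (he : e ≠ 0) (hf : f ≠ 0) : ∃ P : Matrix ι ι K, IsUnit P ∧ P *ᵥ e = f := by
  have := MulAction.isPretransitive_of_is_two_pretransitive
    (G := (ι → K) ≃ₗ[K] (ι → K)) (α := Projectivization K (ι → K))
  obtain ⟨g, hg⟩ := MulAction.exists_smul_eq ((ι → K) ≃ₗ[K] (ι → K))
    (Projectivization.mk K e he) (Projectivization.mk K f hf)
  rw [Projectivization.smul_mk, Projectivization.mk_eq_mk_iff] at hg
  obtain ⟨a, ha⟩ := hg
  refine ⟨a⁻¹ • LinearMap.toMatrix' (g : (ι → K) →ₗ[K] (ι → K)), ?_, ?_⟩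
  · exact (LinearMap.isUnit_toMatrix'_iff.2 (Module.End.isUnit_iff _ |>.2 g.bijective)).smul _
  · rw [smul_mulVec, LinearMap.toMatrix'_mulVec, LinearEquiv.coe_coe, ← LinearEquiv.smul_def, ← ha,
      inv_smul_smul]

end LinearAlgebra

section Wedge

variable {K : Type*} [Field K] {ι : Type*}

def wedge (u v : ι → K) : Matrix ι ι K := vecMulVec u v - vecMulVec v u

@[simp]
theorem wedge_apply (u v : ι → K) (i j : ι) : wedge u v i j = u i * v j - v i * u j := rfl

@[simp]
theorem wedge_self (u : ι → K) : wedge u u = 0 := sub_self _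

theorem wedge_comm (u v : ι → K) : wedge v u = -wedge u v := (neg_sub _ _).symm

def wedgeBilin : (ι → K) →ₗ[K] (ι → K) →ₗ[K] Matrix ι ι K :=
  LinearMap.mk₂ K wedge (fun _ _ _ => by ext; simp; ring) (fun _ _ _ => by ext; simp; ring)
    (fun _ _ _ => by ext; simp; ring) (fun _ _ _ => by ext; simp; ring)

theorem wedge_mem_of_mem_span {s : Set (ι → K)} {T : Submodule K (Matrix ι ι K)}
    (hs : ∀ a ∈ s, ∀ b ∈ s, wedge a b ∈ T) {u v : ι → K} (hu : u ∈ span K s)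
    (hv : v ∈ span K s) : wedge u v ∈ T := by
  have := apply_mem_map₂ wedgeBilin hu hv
  rw [map₂_span_span] at this
  exact span_le.2 (Set.image2_subset_iff.2 hs) this

theorem wedge_mem_span_wedge_of_mem_span_pair {a b u v : ι → K}
    (hu : u ∈ span K {a, b}) (hv : v ∈ span K {a, b}) : wedge u v ∈ K ∙ wedge a b := by
  have hab : wedge a b ∈ K ∙ wedge a b := mem_span_singleton_self _
  have hba : wedge b a ∈ K ∙ wedge a b := wedge_comm a b ▸ neg_mem hab
  refine wedge_mem_of_mem_span ?_ hu hv
  rintro _ (rfl | rfl) _ (rfl | rfl) <;> simp [hab, hba]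

theorem wedge_mem_span_of_mem_span_range {b : Fin 3 → ι → K} {u v : ι → K}
    (hu : u ∈ span K (Set.range b)) (hv : v ∈ span K (Set.range b)) :
    wedge u v ∈ span K (Set.range ![wedge (b 0) (b 1), wedge (b 0) (b 2), wedge (b 1) (b 2)]) := by
  refine wedge_mem_of_mem_span ?_ hu hv
  rintro _ ⟨i, rfl⟩ _ ⟨j, rfl⟩
  fin_cases i <;> fin_cases j <;>
    simp [wedge_comm (b 0) (b 1), wedge_comm (b 0) (b 2), wedge_comm (b 1) (b 2)] <;>
    exact subset_span (by simp)

theorem exists_wedge_eq_wedge_of_mem_span_pair {u v e : ι → K} (he : e ∈ span K {u, v})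
    (he0 : e ≠ 0) : ∃ w, wedge u v = wedge e w := by
  obtain ⟨a, b, rfl⟩ := mem_span_pair.1 he
  by_cases ha : a = 0
  · have hb : b ≠ 0 := by rintro rfl; simp [ha] at he0
    refine ⟨-b⁻¹ • u, ?_⟩
    ext i j
    simp only [ha, wedge_apply, Pi.add_apply, Pi.smul_apply, smul_eq_mul]
    field_simp
    ring
  · refine ⟨a⁻¹ • v, ?_⟩
    ext i j
    simp only [wedge_apply, Pi.add_apply, Pi.smul_apply, smul_eq_mul]
    field_simp
    ring

section Alternating

variable {M : Matrix ι ι K} (hskew : Mᵀ = -M) (hdiag : ∀ i, M i i = 0)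
include hskew hdiag

theorem linearIndependent_row_pair {i j : ι} (hij : M i j ≠ 0) :
    LinearIndependent K ![M i, M j] := by
  have hji : M j i = -M i j := by simpa using congrFun (congrFun hskew i) j
  rw [LinearIndependent.pair_iff]
  intro s t hst
  have hj := congrFun hst j
  have hi := congrFun hst i
  simp only [Pi.add_apply, Pi.smul_apply, smul_eq_mul, hdiag, hji, Pi.zero_apply] at hi hj
  exact ⟨by simpa [hij] using hj, by simpa [hij] using hi⟩

variable [Fintype ι]

theorem row_mem_span_row_pair (hrk : M.rank ≤ 2) {i j : ι} (hij : M i j ≠ 0) (k : ι) :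
    M k ∈ span K {M i, M j} := by
  have hle : span K {M i, M j} ≤ span K (Set.range M.row) :=
    span_mono (by rintro _ (rfl | rfl) <;> exact ⟨_, rfl⟩)
  have heq := eq_of_le_of_finrank_le hle <| by
    rw [← rank_eq_finrank_span_row, finrank_span_pair_eq_two
      (linearIndependent_row_pair hskew hdiag hij)]
    exact hrk
  exact heq ▸ subset_span ⟨k, rfl⟩

theorem exists_linearIndependent_eq_wedge (hrk : M.rank ≤ 2) (hM : M ≠ 0) :
    ∃ u v, LinearIndependent K ![u, v] ∧ M = wedge u v := by
  obtain ⟨i, j, hij⟩ : ∃ i j, M i j ≠ 0 := by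
    by_contra! h
    exact hM (Matrix.ext h)
  refine ⟨M i, (M i j)⁻¹ • M j, ?_, ?_⟩
  · simpa using (LinearIndependent.pair_smul_smul_iff isUnit_one
      (inv_ne_zero hij).isUnit).2 (linearIndependent_row_pair hskew hdiag hij)
  ext k l
  obtain ⟨a, b, hab⟩ := mem_span_pair.1 (row_mem_span_row_pair hskew hdiag hrk hij k)
  have hki : M k i = -M i k := by simpa using congrFun (congrFun hskew i) k
  have hkj : M k j = -M j k := by simpa using congrFun (congrFun hskew j) k
  have hji : M j i = -M i j := by simpa using congrFun (congrFun hskew i) j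
  have hi := congrFun hab i
  have hj := congrFun hab j
  have hl := congrFun hab l
  simp only [Pi.add_apply, Pi.smul_apply, smul_eq_mul, hdiag, hki, hkj, hji] at hi hj hl
  simp only [wedge_apply, Pi.smul_apply, smul_eq_mul]
  field_simp
  linear_combination M i j * hl.symm + M i l * hj - M j l * hi

end Alternating

variable [Fintype ι]

theorem wedge_mulVec (u v x : ι → K) : wedge u v *ᵥ x = (v ⬝ᵥ x) • u - (u ⬝ᵥ x) • v := by
  simp [wedge, sub_mulVec, vecMulVec_mulVec]

theorem mul_wedge_mul_transpose (P : Matrix ι ι K) (u v : ι → K) :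
    P * wedge u v * Pᵀ = wedge (P *ᵥ u) (P *ᵥ v) := by
  simp [wedge, Matrix.mul_sub, Matrix.sub_mul, mul_vecMulVec, vecMulVec_mul, vecMul_transpose]

theorem four_le_rank_wedge_add_wedge {u v u' v' : ι → K}
    (h : LinearIndependent K (Sum.elim ![u, v] ![u', v'])) :
    4 ≤ (wedge u v + wedge u' v').rank := by
  have hsurj : ∀ c : Fin 2 ⊕ Fin 2 → K, c (.inl 1) • u - c (.inl 0) • v + c (.inr 1) • u'
      - c (.inr 0) • v' ∈ LinearMap.range (wedge u v + wedge u' v').mulVecLin := by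
    intro c
    obtain ⟨x, hx⟩ := exists_forall_dotProduct_eq h c
    refine ⟨x, ?_⟩
    simp only [Matrix.mulVecLin_apply, add_mulVec, wedge_mulVec]
    rw [← hx (.inl 0), ← hx (.inl 1), ← hx (.inr 0), ← hx (.inr 1)]
    simp only [Sum.elim_inl, Sum.elim_inr, Matrix.cons_val_zero, Matrix.cons_val_one]
    abel
  have hle : span K (Set.range (Sum.elim ![u, v] ![u', v'])) ≤
      LinearMap.range (wedge u v + wedge u' v').mulVecLin := by
    rw [span_le]
    rintro _ ⟨i | i, rfl⟩ <;> fin_cases i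
    · simpa using hsurj (Sum.elim ![0, 1] 0)
    · simpa using hsurj (Sum.elim ![-1, 0] 0)
    · simpa using hsurj (Sum.elim 0 ![0, 1])
    · simpa using hsurj (Sum.elim 0 ![-1, 0])
  calc 4 = finrank K (span K (Set.range (Sum.elim ![u, v] ![u', v']))) := by
        simp [finrank_span_eq_card h]
    _ ≤ _ := finrank_mono hle

theorem not_disjoint_span_pair_of_rank_wedge_add_wedge_le_two {u v u' v' : ι → K}
    (hu : LinearIndependent K ![u, v]) (hu' : LinearIndependent K ![u', v'])
    (hrk : (wedge u v + wedge u' v').rank ≤ 2) :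
    ¬Disjoint (span K {u, v}) (span K {u', v'}) := by
  intro hdisj
  have h := (linearIndependent_sum (v := Sum.elim ![u, v] ![u', v'])).2
    ⟨hu, hu', by rwa [Sum.elim_comp_inl, Sum.elim_comp_inr, Matrix.range_cons_cons_empty,
      Matrix.range_cons_cons_empty]⟩
  have := four_le_rank_wedge_add_wedge h
  omega

end Wedge

section WedgePlanes

variable {K : Type*} [Field K] {ι : Type*}

def wedgePlanes (S : Submodule K (Matrix ι ι K)) : Set (Submodule K (ι → K)) :=
  {U | ∃ u v, LinearIndependent K ![u, v] ∧ wedge u v ∈ S ∧ U = span K {u, v}}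

variable {S : Submodule K (Matrix ι ι K)}

theorem finrank_eq_two_of_mem_wedgePlanes {U : Submodule K (ι → K)} (hU : U ∈ wedgePlanes S) :
    finrank K U = 2 := by
  obtain ⟨u, v, huv, -, rfl⟩ := hU
  exact finrank_span_pair_eq_two huv

theorem inf_ne_bot_of_mem_wedgePlanes [Fintype ι] (hrk : ∀ M ∈ S, M.rank ≤ 2)
    {U U' : Submodule K (ι → K)} (hU : U ∈ wedgePlanes S) (hU' : U' ∈ wedgePlanes S) :
    U ⊓ U' ≠ ⊥ := by
  obtain ⟨u, v, huv, hS, rfl⟩ := hU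
  obtain ⟨u', v', huv', hS', rfl⟩ := hU'
  exact fun h => not_disjoint_span_pair_of_rank_wedge_add_wedge_le_two huv huv'
    (hrk _ (add_mem hS hS')) (disjoint_iff.2 h)

variable (hdec : ∀ M ∈ S, M ≠ 0 → ∃ u v, LinearIndependent K ![u, v] ∧ M = wedge u v)
include hdec

theorem exists_ne_mem_wedgePlanes (hS : 1 < finrank K S) :
    ∃ U₁ ∈ wedgePlanes S, ∃ U₂ ∈ wedgePlanes S, U₁ ≠ U₂ := by
  obtain ⟨M₁, hM₁, hM₁0⟩ := exists_mem_ne_zero_of_ne_bot fun h : S = ⊥ => by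
    rw [h, finrank_bot] at hS
    omega
  obtain ⟨M₂, hM₂, hM₂₁⟩ : ∃ M₂ ∈ S, M₂ ∉ K ∙ M₁ := by
    by_contra! h
    have := finrank_mono (show S ≤ K ∙ M₁ from h)
    rw [finrank_span_singleton hM₁0] at this
    omega
  have hM₂0 : M₂ ≠ 0 := fun h => hM₂₁ (h ▸ zero_mem _)
  obtain ⟨u₁, v₁, h₁, rfl⟩ := hdec M₁ hM₁ hM₁0
  obtain ⟨u₂, v₂, h₂, rfl⟩ := hdec M₂ hM₂ hM₂0
  refine ⟨_, ⟨u₁, v₁, h₁, hM₁, rfl⟩, _, ⟨u₂, v₂, h₂, hM₂, rfl⟩, fun heq => hM₂₁ ?_⟩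
  exact wedge_mem_span_wedge_of_mem_span_pair (heq ▸ subset_span (by simp))
    (heq ▸ subset_span (by simp))

theorem exists_eq_wedge_of_forall_mem_wedgePlanes {e : ι → K} (he0 : e ≠ 0)
    (he : ∀ U ∈ wedgePlanes S, e ∈ U) {M : Matrix ι ι K} (hM : M ∈ S) : ∃ w, M = wedge e w := by
  rcases eq_or_ne M 0 with rfl | hM0
  · exact ⟨0, by ext; simp⟩
  obtain ⟨u, v, huv, rfl⟩ := hdec M hM hM0
  exact exists_wedge_eq_wedge_of_mem_span_pair (he _ ⟨u, v, huv, hM, rfl⟩) he0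

theorem finrank_le_three_of_forall_wedgePlanes_le [Fintype ι] {W : Submodule K (ι → K)}
    (hW : finrank K W = 3) (h : ∀ U ∈ wedgePlanes S, U ≤ W) : finrank K S ≤ 3 := by
  obtain ⟨b, hb⟩ := exists_span_range_eq_of_finrank_eq hW
  have hST :
      S ≤ span K (Set.range ![wedge (b 0) (b 1), wedge (b 0) (b 2), wedge (b 1) (b 2)]) := by
    intro M hM
    rcases eq_or_ne M 0 with rfl | hM0
    · exact zero_mem _
    obtain ⟨u, v, huv, rfl⟩ := hdec M hM hM0
    have hUW := hb ▸ h _ ⟨u, v, huv, hM, rfl⟩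
    exact wedge_mem_span_of_mem_span_range (hUW (subset_span (by simp)))
      (hUW (subset_span (by simp)))
  exact (finrank_mono hST).trans ((finrank_range_le_card _).trans (by simp))

end WedgePlanes

theorem alt_rank_two_classification (K : Type*) [Field K] (n : ℕ)
    (S : Submodule K (Matrix (Fin n) (Fin n) K))
    (hAlt : ∀ M ∈ S, Mᵀ = -M ∧ ∀ i : Fin n, M i i = 0)
    (hdim : 3 < Module.finrank K S)
    (hrk : ∀ M ∈ S, M.rank ≤ 2) :
    ∃ P : Matrix (Fin n) (Fin n) K, IsUnit P ∧
      ∀ M ∈ S, ∀ i j : Fin n, 1 ≤ i.1 → 1 ≤ j.1 → (P * M * Pᵀ) i j = 0 := by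
  have hdec : ∀ M ∈ S, M ≠ 0 → ∃ u v, LinearIndependent K ![u, v] ∧ M = wedge u v :=
    fun M hM => exists_linearIndependent_eq_wedge (hAlt M hM).1 (hAlt M hM).2 (hrk M hM)
  have h2 := fun U (hU : U ∈ wedgePlanes S) => finrank_eq_two_of_mem_wedgePlanes hU
  have hmeet := fun U (hU : U ∈ wedgePlanes S) U' (hU' : U' ∈ wedgePlanes S) =>
    inf_ne_bot_of_mem_wedgePlanes hrk hU hU'
  obtain ⟨U₁, h₁, U₂, h₂, hne⟩ := exists_ne_mem_wedgePlanes hdec (by omega)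
  rcases forall_inf_le_or_forall_le_sup h2 hmeet h₁ h₂ hne with hcommon | hcontained
  · obtain ⟨e, he, he0⟩ := exists_mem_ne_zero_of_ne_bot (hmeet U₁ h₁ U₂ h₂)
    obtain ⟨k, -⟩ := Function.ne_iff.1 he0
    let i₀ : Fin n := ⟨0, k.pos⟩
    obtain ⟨P, hP, hPe⟩ : ∃ P : Matrix (Fin n) (Fin n) K, IsUnit P ∧ P *ᵥ e = Pi.single i₀ 1 :=
      exists_isUnit_mulVec_eq he0 (Pi.single_ne_zero_iff.2 one_ne_zero)
    refine ⟨P, hP, fun M hM i j hi hj => ?_⟩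
    obtain ⟨w, rfl⟩ :=
      exists_eq_wedge_of_forall_mem_wedgePlanes hdec he0 (fun U hU => hcommon U hU he) hM
    have hi₀ : i ≠ i₀ := Fin.ne_of_val_ne (by simp [i₀]; omega)
    have hj₀ : j ≠ i₀ := Fin.ne_of_val_ne (by simp [i₀]; omega)
    simp [mul_wedge_mul_transpose, hPe, hi₀, hj₀]
  · have := finrank_le_three_of_forall_wedgePlanes_le hdec
      (finrank_sup_eq_three (h2 U₁ h₁) (h2 U₂ h₂) hne (hmeet U₁ h₁ U₂ h₂)) hcontained
    omega
end

section
/- Let K be a field, n and s positive integers with 2s < n - 1, and let S be a linear subspace of alternating n×n matrices with every matrix of S of rank at most 2s. Write each M ∈ S in block form with blocks of sizes (s, n-1-s, 1): M = [[?, -B(M)^T, ?],[B(M), 0, C(M)],[?, -C(M)^T, 0]], where the middle (n-1-s)×(n-1-s) block is assumed zero for all M ∈ S. Then for every M ∈ S, the (n-1-s)×(s+1) matrix [B(M) | C(M)] has rank at most s. -/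
/-!
Let `D` be the diagonal projection onto the middle block of indices. The vanishing middle block
says `D * M * D = 0`, so the image of `M * D` lies in `range M ∩ ker D`, while `D * M` is `D`
restricted to `range M`; rank–nullity for `D` on `range M` gives
`rank (M * D) + rank (D * M) ≤ rank M`. The matrix `[B | C]` is a submatrix of `D * M`, and by
skew-symmetry its transpose is, up to sign, a submatrix of `M * D`. Hence
`2 * rank [B | C] ≤ rank M ≤ 2 * s`.
-/

open Matrix Module

theorem LinearMap.finrank_range_comp_add_finrank_range_comp_le {K V W : Type*} [Field K]
    [AddCommGroup V] [Module K V] [AddCommGroup W] [Module K W] [FiniteDimensional K W]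
    (f : V →ₗ[K] W) (g : W →ₗ[K] V) (h : g ∘ₗ f ∘ₗ g = 0) :
    finrank K (range (f ∘ₗ g)) + finrank K (range (g ∘ₗ f)) ≤ finrank K (range f) := by
  set g' := g.domRestrict (range f)
  have hrange : range g' = range (g ∘ₗ f) := by rw [range_domRestrict, range_comp]
  have hker : range (f ∘ₗ g) ≤ (ker g').map (range f).subtype := by
    rintro _ ⟨w, rfl⟩
    exact ⟨⟨f (g w), mem_range_self f _⟩, by simpa [g'] using congr($h w), rfl⟩
  calc _ ≤ finrank K ((ker g').map (range f).subtype) + finrank K (range g') := by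
        rw [hrange]; exact Nat.add_le_add_right (Submodule.finrank_mono hker) _
    _ = finrank K (range f) := by
        rw [Submodule.finrank_map_subtype_eq, add_comm, finrank_range_add_finrank_ker]

namespace Matrix

variable {K m n ι κ : Type*} [Field K] [Fintype n]

theorem rank_neg (A : Matrix m n K) : (-A).rank = A.rank := by
  have : (-A).mulVecLin = -A.mulVecLin := by ext; simp
  rw [rank, rank, this, LinearMap.range_neg]

theorem rank_mul_add_rank_mul_le [Fintype m] (A : Matrix m n K) (D : Matrix n m K)
    (h : D * A * D = 0) : (A * D).rank + (D * A).rank ≤ A.rank := by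
  refine LinearMap.finrank_range_comp_add_finrank_range_comp_le A.mulVecLin D.mulVecLin ?_
    |>.trans_eq' ?_
  · rw [← mulVecLin_mul, ← mulVecLin_mul, ← Matrix.mul_assoc, h, mulVecLin_zero]
  · rw [rank, rank, mulVecLin_mul, mulVecLin_mul]

theorem rank_submatrix_add_rank_submatrix_le [Fintype m] [DecidableEq m] [Fintype ι] [Fintype κ]
    (A : Matrix m m K) (p : m → Prop) [DecidablePred p] (hA : ∀ i j, p i → p j → A i j = 0)
    (r : ι → m) (hr : ∀ i, p (r i)) (c : κ → m) :
    (A.submatrix r c).rank + (A.submatrix c r).rank ≤ A.rank := by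
  set D : Matrix m m K := diagonal fun i => if p i then 1 else 0
  have hDAD : D * A * D = 0 := by
    ext i j
    by_cases hi : p i <;> by_cases hj : p j <;> simp [D, hi, hj, hA]
  have hDA : A.submatrix r c = (D * A).submatrix r c := by ext; simp [D, hr]
  have hAD : A.submatrix c r = (A * D).submatrix c r := by ext; simp [D, hr]
  calc _ ≤ (D * A).rank + (A * D).rank := by
        rw [hDA, hAD]; exact add_le_add (rank_submatrix_le _ _ _) (rank_submatrix_le _ _ _)
    _ ≤ A.rank := by rw [add_comm]; exact rank_mul_add_rank_mul_le A D hDAD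

end Matrix

theorem BC_rank_le (K : Type*) [Field K] (n s : ℕ) (hn : 2 * s < n - 1)
    (S : Submodule K (Matrix (Fin n) (Fin n) K))
    (hAlt : ∀ M ∈ S, Mᵀ = -M ∧ ∀ i : Fin n, M i i = 0)
    (hmid : ∀ M ∈ S, ∀ i j : Fin n,
      s ≤ i.1 → i.1 < n - 1 → s ≤ j.1 → j.1 < n - 1 → M i j = 0)
    (hrk : ∀ M ∈ S, M.rank ≤ 2 * s) :
    ∀ M ∈ S,
      (Matrix.of (fun (i : Fin (n - 1 - s)) (j : Fin (s + 1)) =>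
        if h : j.1 < s then
          M ⟨s + i.1, by have := i.2; omega⟩ ⟨j.1, by omega⟩
        else
          M ⟨s + i.1, by have := i.2; omega⟩ ⟨n - 1, by omega⟩)).rank ≤ s := by
  intro M hM
  let r : Fin (n - 1 - s) → Fin n := fun i => ⟨s + i.1, by omega⟩
  let c : Fin (s + 1) → Fin n := fun j =>
    if h : j.1 < s then ⟨j.1, by omega⟩ else ⟨n - 1, by omega⟩
  suffices (M.submatrix r c).rank ≤ s by
    convert this using 2
    ext i j
    by_cases h : j.1 < s <;> simp [r, c, h]
  have hskew : M.submatrix c r = -(M.submatrix r c)ᵀ := by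
    ext i j
    simpa using congr_fun₂ (hAlt M hM).1 (r j) (c i)
  have hBC := rank_submatrix_add_rank_submatrix_le M (fun k => s ≤ k.1 ∧ k.1 < n - 1)
    (fun i j hi hj => hmid M hM i j hi.1 hi.2 hj.1 hj.2) r
    (fun i => ⟨by simp [r], by simp [r]; omega⟩) c
  rw [hskew, rank_neg, rank_transpose] at hBC
  have := hrk M hM
  omega
end
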